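/- Let F be the class of affine functions x ↦ wᵀx + b over all w ∈ ℝ^p, b ∈ ℝ. The class of half-spaces {x : wᵀx + b > 0} shatters a set of p+1 points in ℝ^p but shatters no set of p+2 points; i.e., the VC dimension of half-spaces in ℝ^p is p+1. -/
import Mathlib

open Matrix

/-- A class of subsets `C` shatters a finite set `A` if every subset of `A`
is cut out by a member of `C`. -/
def ShattersSet {α : Type*} (C : Set (Set α)) (A : Finset α) : Prop :=
  ∀ B : Set α, B ⊆ (A : Set α) → ∃ c ∈ C, (A : Set α) ∩ c = B

/-- Half-spaces in `ℝ^p` determined by affine functions. -/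
def HalfSpaces (p : ℕ) : Set (Set (Fin p → ℝ)) :=
  { S | ∃ (w : Fin p → ℝ) (b : ℝ), S = {x | 0 < w ⬝ᵥ x + b} }

theorem stmt_17 (p : ℕ) :
    (∃ A : Finset (Fin p → ℝ), A.card = p + 1 ∧ ShattersSet (HalfSpaces p) A) ∧
      ∀ A : Finset (Fin p → ℝ), A.card = p + 2 → ¬ ShattersSet (HalfSpaces p) A := by
  classical
  constructor
  · -- lower bound: shatter {0, e₁, ..., e_p}
    refine ⟨insert 0 (Finset.univ.image (fun i : Fin p => Pi.single i 1)), ?_, ?_⟩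
    · have hinj : Function.Injective (fun i : Fin p => Pi.single i (1:ℝ)) := by
        intro i j h
        by_contra hne
        have := congrFun h i
        simp [Pi.single_apply, hne] at this
      rw [Finset.card_insert_of_notMem, Finset.card_image_of_injective _ hinj,
        Finset.card_univ, Fintype.card_fin]
      intro hmem
      obtain ⟨i, _, hi⟩ := Finset.mem_image.1 hmem
      have := congrFun hi i
      simp [Pi.single_apply] at this
    · intro B hB
      set w : Fin p → ℝ := fun i => if Pi.single i 1 ∈ B then 1 else -1 with hw
      set b : ℝ := if (0 : Fin p → ℝ) ∈ B then 1/2 else -1/2 with hb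
      refine ⟨{x | 0 < w ⬝ᵥ x + b}, ⟨w, b, rfl⟩, ?_⟩
      ext x
      simp only [Set.mem_inter_iff, Set.mem_setOf_eq, Finset.coe_insert, Set.mem_insert_iff,
        Finset.coe_image, Finset.coe_univ, Set.image_univ, Set.mem_range]
      constructor
      · rintro ⟨(rfl | ⟨i, rfl⟩), hx⟩
        · rw [dotProduct_zero, zero_add] at hx
          by_contra h0
          simp [hb, h0] at hx
          linarith
        · rw [dotProduct_single, mul_one] at hx
          by_contra h0
          simp [hw, h0, hb] at hx
          split_ifs at hx <;> linarith
      · intro hxB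
        have hxA := hB hxB
        simp only [Finset.coe_insert, Set.mem_insert_iff, Finset.coe_image, Finset.coe_univ,
          Set.image_univ, Set.mem_range] at hxA
        refine ⟨hxA, ?_⟩
        rcases hxA with rfl | ⟨i, rfl⟩
        · rw [dotProduct_zero, zero_add]
          simp [hb, hxB]
        · rw [dotProduct_single, mul_one]
          simp only [hw, hxB, if_true, hb]
          split_ifs <;> linarith
  · -- upper bound via Radon's theorem
    intro A hA hshat
    have hcard : Fintype.card ↥(A : Set (Fin p → ℝ)) = p + 2 := by
      simpa using hA
    have hdep : ¬ AffineIndependent ℝ (fun a : ↥(A : Set (Fin p → ℝ)) => (a : Fin p → ℝ)) := by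
      intro hind
      have h1 := hind.card_le_finrank_succ
      have h2 : Module.finrank ℝ (vectorSpan ℝ (Set.range
          (fun a : ↥(A : Set (Fin p → ℝ)) => (a : Fin p → ℝ)))) ≤ p := by
        have := Submodule.finrank_le (vectorSpan ℝ (Set.range
          (fun a : ↥(A : Set (Fin p → ℝ)) => (a : Fin p → ℝ))))
        simpa [Module.finrank_pi] using this
      omega
    obtain ⟨I, x, hx1, hx2⟩ := Convex.radon_partition hdep
    set f : ↥(A : Set (Fin p → ℝ)) → (Fin p → ℝ) := fun a => (a : Fin p → ℝ) with hf
    set B : Set (Fin p → ℝ) := f '' I with hBdef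
    have hBA : B ⊆ (A : Set (Fin p → ℝ)) := by
      rintro _ ⟨a, _, rfl⟩; exact a.2
    obtain ⟨c, ⟨w, b, rfl⟩, hc⟩ := hshat B hBA
    have hlin : IsLinearMap ℝ (fun x : Fin p → ℝ => w ⬝ᵥ x) :=
      ⟨fun x y => dotProduct_add w x y, fun c x => by simp [dotProduct_smul]⟩
    -- convex hull of f '' I lies in the open halfspace
    have hIc : f '' I ⊆ {x | -b < w ⬝ᵥ x} := by
      rintro _ ⟨a, ha, rfl⟩
      have : f a ∈ (A : Set (Fin p → ℝ)) ∩ {x | 0 < w ⬝ᵥ x + b} := by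
        rw [hc]; exact ⟨a, ha, rfl⟩
      have := this.2
      simp only [Set.mem_setOf_eq] at this ⊢
      linarith
    have hIcc : f '' Iᶜ ⊆ {x | w ⬝ᵥ x ≤ -b} := by
      rintro _ ⟨a, ha, rfl⟩
      have hnB : f a ∉ B := by
        rintro ⟨a', ha', heq⟩
        have : a' = a := Subtype.ext heq
        exact ha (this ▸ ha')
      have hnc : f a ∉ {x | 0 < w ⬝ᵥ x + b} := by
        intro hmem
        exact hnB (hc ▸ ⟨a.2, hmem⟩)
      simp only [Set.mem_setOf_eq, not_lt] at hnc ⊢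
      linarith
    have h1 : x ∈ {x | -b < w ⬝ᵥ x} :=
      convexHull_min hIc (convex_halfSpace_gt hlin (-b)) hx1
    have h2 : x ∈ {x | w ⬝ᵥ x ≤ -b} :=
      convexHull_min hIcc (convex_halfSpace_le hlin (-b)) hx2
    simp only [Set.mem_setOf_eq] at h1 h2
    linarith
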